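/- Define the sequence γ = {τ_k}_{k=1}^∞ by τ_1 = 1 and τ_k = k − Σ_{ℓ=2}^k (1/ℓ) for k ≥ 2. Then γ is an impulse-time sequence (strictly increasing, positive, tending to ∞), γ belongs to Sup(1), but γ does not belong to Sad(n,1) for any n ∈ ℕ. -/

import Mathlib

open Set Filter

noncomputable section

/-- An (infinite) impulse-time sequence: strictly increasing, positive, with no finite
limit point (i.e. tending to `∞`). -/
def IsImpSeqFun (τ : ℕ → ℝ) : Prop :=
  StrictMono τ ∧ 0 < τ 0 ∧ Filter.Tendsto τ Filter.atTop Filter.atTop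

/-- `seqCnt τ s t` is the number `n^γ_{(s,t]}` of terms of the sequence `τ` lying in `(s, t]`. -/
def seqCnt (τ : ℕ → ℝ) (s t : ℝ) : ℕ := (Set.range τ ∩ Set.Ioc s t).ncard

/-- Membership in the class `Sup(ρ)` (impulse frequency eventually uniformly upper bounded
by `ρ`), for sequences. -/
def SeqMemSup (ρ : ℝ) (τ : ℕ → ℝ) : Prop :=
  IsImpSeqFun τ ∧ ∀ ε : ℝ, 0 < ε → ∃ T : ℝ, 0 < T ∧
    ∀ t : ℝ, T ≤ t → ∀ s : ℝ, 0 ≤ s → (seqCnt τ s (s + t) : ℝ) / t ≤ ρ + ε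

/-- Membership in the class `Sdn(ρ)` (impulse frequency eventually uniformly lower bounded
by `ρ`), for sequences. -/
def SeqMemSdn (ρ : ℝ) (τ : ℕ → ℝ) : Prop :=
  IsImpSeqFun τ ∧ ∀ ε : ℝ, 0 < ε → ∃ T : ℝ, 0 < T ∧
    ∀ t : ℝ, T ≤ t → ∀ s : ℝ, 0 ≤ s → ρ - ε ≤ (seqCnt τ s (s + t) : ℝ) / t

/-- Membership in the average dwell-time class `Sad(n, τADT)`. -/
def SeqMemSad (n : ℕ) (τADT : ℝ) (τ : ℕ → ℝ) : Prop :=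
  IsImpSeqFun τ ∧ ∀ s t : ℝ, 0 ≤ s → s ≤ t → (seqCnt τ s t : ℝ) ≤ (n : ℝ) + (t - s) / τADT

/-- Membership in the reverse average dwell-time class `Srad(n, τADT)`. -/
def SeqMemSrad (n : ℕ) (τADT : ℝ) (τ : ℕ → ℝ) : Prop :=
  IsImpSeqFun τ ∧ ∀ s t : ℝ, 0 ≤ s → s ≤ t → -(n : ℝ) + (t - s) / τADT ≤ (seqCnt τ s t : ℝ)

/-- The sequence of Example 2: `τ_1 = 1` and `τ_k = k − Σ_{ℓ=2}^k 1/ℓ` for `k ≥ 2`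
(indexed here so that `gammaSeq (k-1) = τ_k`). -/
def gammaSeq (k : ℕ) : ℝ :=
  ((k + 1 : ℕ) : ℝ) - ∑ ℓ ∈ Finset.Icc 2 (k + 1), (1 : ℝ) / (ℓ : ℝ)

/-!
The gaps `τ_{k+1} - τ_k = 1 - 1/(k+1)` increase, so `N` consecutive terms span at least
`τ_N - τ_1 = N - H_N`, where `H_N` is the `N`-th harmonic number. Since `H_N ≤ 1 + log N = o(N)`,
a window of length `t` holds at most `(1 + o(1)) t` terms, which gives `Sup(1)`. On the other
hand `(0, τ_K]` holds `K` terms but has length `τ_K = K + 1 - H_K`, so `Sad(n, 1)` would force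
`H_K ≤ n + 1` for all `K`, contradicting the divergence of the harmonic series.
-/

open Asymptotics

section ImpulseSequence

variable {τ : ℕ → ℝ}

lemma seqCnt_eq_ncard_preimage (hτ : Function.Injective τ) (s t : ℝ) :
    seqCnt τ s t = (τ ⁻¹' Ioc s t).ncard := by
  rw [seqCnt, inter_comm, ← image_preimage_eq_inter_range, ncard_image_of_injective _ hτ]

lemma seqCnt_zero_apply (hτ : StrictMono τ) (h0 : 0 < τ 0) (k : ℕ) :
    seqCnt τ 0 (τ k) = k + 1 := by
  have hpre : τ ⁻¹' Ioc 0 (τ k) = Iic k := by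
    ext j
    simp only [mem_preimage, mem_Ioc, mem_Iic, hτ.le_iff_le, and_iff_right_iff_imp]
    exact fun _ => h0.trans_le (hτ.monotone j.zero_le)
  rw [seqCnt_eq_ncard_preimage hτ.injective, hpre, ← Finset.coe_Iic, ncard_coe_finset,
    Nat.card_Iic]

lemma exists_run_of_seqCnt_pos (hτ : StrictMono τ) {s t : ℝ} (h : 0 < seqCnt τ s t) :
    ∃ m, τ m ∈ Ioc s t ∧ τ (m + (seqCnt τ s t - 1)) ∈ Ioc s t := by
  rw [seqCnt_eq_ncard_preimage hτ.injective] at h ⊢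
  have hfin := finite_of_ncard_pos h
  have hne : hfin.toFinset.Nonempty := by
    rwa [← Finset.card_pos, ← ncard_eq_toFinset_card _ hfin]
  set m := hfin.toFinset.min' hne
  set M := hfin.toFinset.max' hne
  have hm : τ m ∈ Ioc s t := hfin.mem_toFinset.1 (Finset.min'_mem _ hne)
  have hM : τ M ∈ Ioc s t := hfin.mem_toFinset.1 (Finset.max'_mem _ hne)
  have hcard : (τ ⁻¹' Ioc s t).ncard ≤ M + 1 - m := by
    rw [ncard_eq_toFinset_card _ hfin, ← Nat.card_Icc]
    exact Finset.card_le_card fun k hk =>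
      Finset.mem_Icc.2 ⟨Finset.min'_le _ k hk, Finset.le_max' _ k hk⟩
  refine ⟨m, hm, hm.1.trans_le (hτ.monotone (Nat.le_add_right _ _)),
    (hτ.monotone ?_).trans hM.2⟩
  omega

lemma sub_le_sub_of_monotone_sub (hgap : Monotone fun k => τ (k + 1) - τ k) (m D : ℕ) :
    τ D - τ 0 ≤ τ (m + D) - τ m := by
  induction D with
  | zero => simp
  | succ D ih =>
    have hstep := hgap (Nat.le_add_left D m)
    simp only [← add_assoc] at hstep ⊢
    linarith

lemma add_mul_le_of_monotone_sub (hgap : Monotone fun k => τ (k + 1) - τ k) (k : ℕ) :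
    τ 0 + k * (τ 1 - τ 0) ≤ τ k := by
  induction k with
  | zero => simp
  | succ k ih =>
    have hstep := hgap k.zero_le
    push_cast
    simp only [zero_add] at hstep
    linarith

lemma isImpSeqFun_of_monotone_sub (hgap : Monotone fun k => τ (k + 1) - τ k) (h0 : 0 < τ 0)
    (h01 : τ 0 < τ 1) : IsImpSeqFun τ := by
  refine ⟨strictMono_nat_of_lt_succ fun k => ?_, h0, ?_⟩
  · have hstep := hgap k.zero_le
    simp only [zero_add] at hstep
    linarith
  · refine tendsto_atTop_mono (add_mul_le_of_monotone_sub hgap) ?_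
    exact tendsto_atTop_add_const_left _ _
      (tendsto_natCast_atTop_atTop.atTop_mul_const (sub_pos.2 h01))

lemma sub_lt_of_seqCnt_pos (hτ : StrictMono τ) (hgap : Monotone fun k => τ (k + 1) - τ k)
    {s t : ℝ} (h : 0 < seqCnt τ s t) : τ (seqCnt τ s t - 1) - τ 0 < t - s := by
  obtain ⟨m, hm, hM⟩ := exists_run_of_seqCnt_pos hτ h
  linarith [sub_le_sub_of_monotone_sub hgap m (seqCnt τ s t - 1), hm.1, hM.2]

lemma seqMemSup_of_isLittleO {ρ : ℝ} (hρ : 0 < ρ) (hτ : IsImpSeqFun τ) {g : ℕ → ℝ}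
    (hg : g =o[atTop] fun N => (N : ℝ))
    (hwin : ∀ s t, 0 < seqCnt τ s t → (seqCnt τ s t : ℝ) - g (seqCnt τ s t) < ρ * (t - s)) :
    SeqMemSup ρ τ := by
  refine ⟨hτ, fun ε hε => ?_⟩
  have hρε : 0 < ρ + ε := by positivity
  -- `ε / (ρ + ε)` is the slack for which `N - g N < ρ t` forces `N < (ρ + ε) t`.
  obtain ⟨N₀, hN₀⟩ := eventually_atTop.1 (hg.def (c := ε / (ρ + ε)) (by positivity))
  refine ⟨(N₀ + 1) / (ρ + ε), by positivity, fun t ht s _ => ?_⟩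
  have ht0 : 0 < t := lt_of_lt_of_le (by positivity) ht
  rw [div_le_iff₀ ht0]
  set N := seqCnt τ s (s + t)
  rcases le_or_gt N N₀ with hN | hN
  · rw [div_le_iff₀ hρε] at ht
    have hN' : (N : ℝ) ≤ N₀ := by exact_mod_cast hN
    linarith
  · have hg_le : |g N| ≤ ε / (ρ + ε) * N := by simpa using hN₀ N hN.le
    have hwin' : (N : ℝ) - g N < ρ * t := by simpa using hwin s (s + t) (by omega)
    have hsplit : ε / (ρ + ε) * N = N - ρ / (ρ + ε) * N := by field_simp; ring
    have hfew : ρ / (ρ + ε) * N < ρ * t := by linarith [le_abs_self (g N)]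
    rw [div_mul_eq_mul_div, div_lt_iff₀ hρε, mul_assoc, mul_comm t] at hfew
    exact (lt_of_mul_lt_mul_left hfew hρ.le).le

end ImpulseSequence

lemma gammaSeq_eq_harmonic (k : ℕ) : gammaSeq k = k + 2 - harmonic (k + 1) := by
  rw [gammaSeq, harmonic_eq_sum_Icc, ← Finset.add_sum_Ioc_eq_sum_Icc (show 1 ≤ k + 1 by omega),
    ← Finset.Icc_add_one_left_eq_Ioc]
  push_cast
  simp only [one_div]
  ring

lemma gammaSeq_zero : gammaSeq 0 = 1 := by
  simp [gammaSeq]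

lemma gammaSeq_succ_sub (k : ℕ) : gammaSeq (k + 1) - gammaSeq k = 1 - 1 / (k + 2) := by
  rw [gammaSeq_eq_harmonic, gammaSeq_eq_harmonic, harmonic_succ]
  push_cast
  ring

lemma monotone_gammaSeq_succ_sub : Monotone fun k => gammaSeq (k + 1) - gammaSeq k := by
  refine monotone_nat_of_le_succ fun k => ?_
  simp only [gammaSeq_succ_sub]
  push_cast
  gcongr
  linarith

lemma isImpSeqFun_gammaSeq : IsImpSeqFun gammaSeq :=
  isImpSeqFun_of_monotone_sub monotone_gammaSeq_succ_sub (by norm_num [gammaSeq_zero])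
    (by linarith [gammaSeq_succ_sub 0])

lemma harmonic_nonneg (N : ℕ) : (0 : ℝ) ≤ harmonic N :=
  (Real.log_nonneg (Nat.one_le_cast.2 N.succ_pos)).trans (log_add_one_le_harmonic N)

lemma isLittleO_harmonic : (fun N => (harmonic N : ℝ)) =o[atTop] fun N => (N : ℝ) := by
  have hlog : (fun x : ℝ => 1 + Real.log x) =o[atTop] id :=
    (isLittleO_const_id_atTop 1).add Real.isLittleO_log_id_atTop
  refine IsBigO.trans_isLittleO ?_ (hlog.comp_tendsto tendsto_natCast_atTop_atTop)
  refine IsBigO.of_norm_le fun N => ?_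
  rw [Real.norm_of_nonneg (harmonic_nonneg N)]
  exact harmonic_le_one_add_log N

lemma tendsto_harmonic_atTop : Tendsto (fun N => (harmonic N : ℝ)) atTop atTop :=
  tendsto_atTop_mono log_add_one_le_harmonic <| Real.tendsto_log_atTop.comp <|
    tendsto_natCast_atTop_atTop.comp (tendsto_add_atTop_nat 1)

lemma seqMemSup_one_gammaSeq : SeqMemSup 1 gammaSeq := by
  refine seqMemSup_of_isLittleO one_pos isImpSeqFun_gammaSeq isLittleO_harmonic fun s t h => ?_
  have hspan := sub_lt_of_seqCnt_pos isImpSeqFun_gammaSeq.1 monotone_gammaSeq_succ_sub h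
  rw [gammaSeq_zero, gammaSeq_eq_harmonic, Nat.sub_add_cancel h, Nat.cast_pred h] at hspan
  linarith

lemma not_seqMemSad_gammaSeq (n : ℕ) : ¬ SeqMemSad n 1 gammaSeq := by
  rintro ⟨⟨hmono, hpos, -⟩, hsad⟩
  obtain ⟨K, hK⟩ := ((tendsto_harmonic_atTop.comp (tendsto_add_atTop_nat 1)).eventually_gt_atTop
    ((n : ℝ) + 1)).exists
  have h := hsad 0 (gammaSeq K) le_rfl (hpos.le.trans (hmono.monotone K.zero_le))
  rw [seqCnt_zero_apply hmono hpos, gammaSeq_eq_harmonic] at h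
  simp only [Function.comp_apply] at hK
  push_cast at h
  linarith

/-- Example 2: `γ = {τ_k}` with `τ_1 = 1`, `τ_k = k − Σ_{ℓ=2}^k 1/ℓ` is an impulse-time
sequence, belongs to `Sup(1)`, but does not belong to `Sad(n,1)` for any `n ∈ ℕ`. -/
theorem gammaSeq_mem_sup_not_sad :
    IsImpSeqFun gammaSeq ∧ SeqMemSup 1 gammaSeq ∧
    ∀ n : ℕ, ¬ SeqMemSad n 1 gammaSeq :=
  ⟨isImpSeqFun_gammaSeq, seqMemSup_one_gammaSeq, not_seqMemSad_gammaSeq⟩
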